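/- There exists a context-free game that has a regular dominant one-pass strategy but no forgetful dominant one-pass strategy. (A witness is the game over Σ={a} with the single rule a→aa and target language {a^k : k ≥ 2}.) -/

import Mathlib

namespace CFG

/-- Juliet's two kinds of moves. -/
inductive JMove : Type
  | call : JMove
  | read : JMove
deriving DecidableEq

/-- The extended alphabet Σ̂: `Sum.inl a` is the plain symbol `a`,
`Sum.inr a` is the "called" copy `â`. -/
abbrev HSym (A : Type) : Type := A ⊕ A

/-- The homomorphism ♮ deleting called symbols. -/
def flat {A : Type} (α : List (HSym A)) : List A :=
  α.filterMap (fun x => match x with | Sum.inl a => some a | Sum.inr _ => none)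

/-- A context-free game: a (minimal) DFA `T` over `A` with finite state set `Q`,
and a replacement relation `R` with nonempty replacement words and regular
replacement languages. -/
structure CFGame (A : Type) where
  Q : Type
  fintypeQ : Fintype Q
  T : DFA A Q
  minimal_reachable : ∀ q : Q, ∃ w : List A, T.evalFrom T.start w = q
  minimal_distinguishable :
    ∀ q q' : Q, (∀ w : List A, T.evalFrom q w ∈ T.accept ↔ T.evalFrom q' w ∈ T.accept) → q = q'
  R : A → List A → Prop
  R_ne : ∀ a v, R a v → v ≠ []
  R_regular : ∀ a, Language.IsRegular {v : List A | R a v}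

variable {A : Type}

/-- `a` is a function symbol (its replacement language is nonempty). -/
def CFGame.Fn (G : CFGame A) (a : A) : Prop := ∃ v, G.R a v

/-- One-pass strategies of Juliet (values at non-function symbols are irrelevant). -/
abbrev JStrat (A : Type) : Type := List (HSym A) → A → JMove

/-- Strategies of Romeo (values at non-function symbols are irrelevant). -/
abbrev RStrat (A : Type) : Type := List (HSym A) → A → List A

/-- Validity of a Romeo strategy: replacement words belong to the replacement language. -/
def CFGame.RValid (G : CFGame A) (τ : RStrat A) : Prop :=
  ∀ (α : List (HSym A)) (a : A), G.Fn a → G.R a (τ α a)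

/-- Configurations, instrumented for depth bookkeeping: a history string, the
remaining string where every symbol is annotated with its call-nesting level,
and the maximal nesting depth of the `Call` moves played so far. -/
abbrev Config (A : Type) : Type := List (HSym A) × List (A × ℕ) × ℕ

/-- One step of a play: Juliet reads or calls the current symbol according to `σ`
(a call is only possible at a function symbol); a call is answered by `τ`. -/
noncomputable def CFGame.step (G : CFGame A) (σ : JStrat A) (τ : RStrat A) :
    Config A → Config A :=
  fun c =>
    match c with
    | (α, [], d) => (α, [], d)
    | (α, (a, k) :: v, d) =>
      letI := Classical.propDecidable (G.Fn a ∧ σ α a = JMove.call)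
      if G.Fn a ∧ σ α a = JMove.call then
        (α ++ [Sum.inr a], (τ α a).map (fun b => (b, k + 1)) ++ v, max d (k + 1))
      else (α ++ [Sum.inl a], v, d)

/-- The play of `σ` against `τ` on input word `w`, as the sequence of its
configurations (the configuration stays fixed once the remaining string is empty). -/
noncomputable def CFGame.play (G : CFGame A) (σ : JStrat A) (τ : RStrat A)
    (w : List A) (n : ℕ) : Config A :=
  (G.step σ τ)^[n] ([], w.map (fun a => (a, 0)), 0)

/-- `σ` wins on `w`: against every (valid) Romeo strategy, the play on `w` is
finite and its final string belongs to the target language. -/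
def CFGame.WinsOn (G : CFGame A) (σ : JStrat A) (w : List A) : Prop :=
  ∀ τ : RStrat A, G.RValid τ →
    ∃ n : ℕ, (G.play σ τ w n).2.1 = [] ∧
      G.T.evalFrom G.T.start (flat (G.play σ τ w n).1) ∈ G.T.accept

/-- The winning set `W(σ)`. -/
def CFGame.W (G : CFGame A) (σ : JStrat A) : Set (List A) := {w | G.WinsOn σ w}

/-- `σ` is terminating: every play of `σ` is finite. -/
def CFGame.Terminating (G : CFGame A) (σ : JStrat A) : Prop :=
  ∀ τ : RStrat A, G.RValid τ → ∀ w : List A, ∃ n : ℕ, (G.play σ τ w n).2.1 = []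

/-- `σ` is dominant: it dominates every one-pass strategy. -/
def CFGame.Dominant (G : CFGame A) (σ : JStrat A) : Prop :=
  ∀ σ' : JStrat A, G.W σ' ⊆ G.W σ

/-- `σ` is undominated: no one-pass strategy strictly dominates it. -/
def CFGame.Undominated (G : CFGame A) (σ : JStrat A) : Prop :=
  ¬ ∃ σ' : JStrat A, G.W σ ⊂ G.W σ'

/-- `σ` is forgetful: its decisions only depend on `♮α` and the current symbol. -/
def CFGame.Forgetful (G : CFGame A) (σ : JStrat A) : Prop :=
  ∀ (α β : List (HSym A)) (a : A), G.Fn a → flat α = flat β → σ α a = σ β a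

/-- `σ` is regular: the language `{αa : σ(α,a) = Call}` over Σ̂ is regular. -/
def CFGame.RegularStrat (G : CFGame A) (σ : JStrat A) : Prop :=
  Language.IsRegular
    {x : List (HSym A) | ∃ (α : List (HSym A)) (a : A),
      G.Fn a ∧ σ α a = JMove.call ∧ x = α ++ [Sum.inl a]}

/-- One step of a strategy automaton of a strongly regular strategy, on the state
set `Q ∪ {Call}` (`none` is the absorbing state `Call`). -/
def optStep {Q : Type} (δA : Q → A → Option Q) (o : Option Q) (a : A) : Option Q :=
  o.bind (fun q => δA q a)

/-- `σ` is strongly regular: given by an automaton obtained from `T` by rerouting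
some transitions to a new accepting state `Call`; Juliet plays `Call` on `(α,a)`
iff the automaton maps `♮α·a` to `Call`. -/
def CFGame.StronglyRegular (G : CFGame A) (σ : JStrat A) : Prop :=
  ∃ δA : G.Q → A → Option G.Q,
    (∀ q a, δA q a = some (G.T.step q a) ∨ δA q a = none) ∧
    ∀ (α : List (HSym A)) (a : A), G.Fn a →
      (σ α a = JMove.call ↔
        List.foldl (optStep δA) (some G.T.start) (flat α ++ [a]) = none)

/-- Shortlex (strict) order on words. -/
def shortLex [LinearOrder A] (v w : List A) : Prop :=
  v.length < w.length ∨ (v.length = w.length ∧ List.Lex (· < ·) v w)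

/-- `V <_sl W` for sets of words: the shortlex-least word of the symmetric
difference belongs to `W`. -/
def slLT [LinearOrder A] (V W : Set (List A)) : Prop :=
  ∃ w : List A, w ∈ W ∧ w ∉ V ∧ ∀ v : List A, shortLex v w → (v ∈ V ↔ v ∈ W)

/-- `V ≤_sl W` for sets of words. -/
def slLE [LinearOrder A] (V W : Set (List A)) : Prop := V = W ∨ slLT V W

/-- `σ` is weakly dominant: `W(σ') ≤_sl W(σ)` for every one-pass strategy `σ'`. -/
def CFGame.WeaklyDominant [LinearOrder A] (G : CFGame A) (σ : JStrat A) : Prop :=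
  ∀ σ' : JStrat A, slLE (G.W σ') (G.W σ)

/-- The bounded depth property. -/
def CFGame.BoundedDepthProperty (G : CFGame A) : Prop :=
  ∃ B : ℕ → ℕ, ∀ σ : JStrat A, ∀ k : ℕ, ∃ σk : JStrat A,
    ∀ w ∈ G.W σ, w.length ≤ k →
      G.WinsOn σk w ∧
      ∀ τ : RStrat A, G.RValid τ → ∀ n : ℕ, (G.play σk τ w n).2.2 ≤ B w.length

/-- Prefix-freeness of all replacement languages. -/
def CFGame.PrefixFree (G : CFGame A) : Prop :=
  ∀ (a : A) (u v : List A), G.R a u → G.R a v → u <+: v → u = v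

/-- Non-recursiveness: no function symbol can be derived from itself. -/
def CFGame.NonRecursive (G : CFGame A) : Prop :=
  ¬ ∃ (n : ℕ) (f : ℕ → A), 1 ≤ n ∧ f 0 = f n ∧ (∀ i ≤ n, G.Fn (f i)) ∧
    ∀ k < n, ∃ v : List A, G.R (f k) v ∧ f (k + 1) ∈ v

/-- `σ` is almost undominated: only finitely many words are lost by `σ` but won
by some strategy dominating `σ`. -/
def CFGame.AlmostUndominated (G : CFGame A) (σ : JStrat A) : Prop :=
  Set.Finite {w : List A | ¬ G.WinsOn σ w ∧
    ∃ σ' : JStrat A, G.W σ ⊆ G.W σ' ∧ G.WinsOn σ' w}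

/-- Convergence of a sequence of one-pass strategies. -/
def Converges (G : CFGame A) (σs : ℕ → JStrat A) (σ : JStrat A) : Prop :=
  ∀ n : ℕ, ∃ k0 : ℕ, ∀ k ≥ k0, ∀ α : List (HSym A), α.length ≤ n →
    ∀ a : A, G.Fn a → σ α a = σs k α a

/-- The one-pass strategy defined by a DFA `M` over Σ̂ (a strategy automaton):
play `Call` on `(α,a)` iff `M` accepts `α·a`. -/
noncomputable def autoStrat {S : Type} (M : DFA (HSym A) S) : JStrat A :=
  fun α a =>
    letI := Classical.propDecidable (M.eval (α ++ [Sum.inl a]) ∈ M.accept)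
    if M.eval (α ++ [Sum.inl a]) ∈ M.accept then JMove.call else JMove.read

/-- `States(q; w, σ)`: the `T`-states `δ*(q, ♮α)` over final history strings `α`
of plays of `σ` on `w`. -/
def CFGame.StatesOf (G : CFGame A) (σ : JStrat A) (q : G.Q) (w : List A) : Set G.Q :=
  {q' | ∃ τ : RStrat A, G.RValid τ ∧ ∃ n : ℕ,
    (G.play σ τ w n).2.1 = [] ∧ G.T.evalFrom q (flat (G.play σ τ w n).1) = q'}

/-- `(p, a, S)` is an effect triple of `σ`. -/
def CFGame.IsEffectTriple (G : CFGame A) (σ : JStrat A) (t : G.Q × A × Set G.Q) : Prop :=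
  G.StatesOf σ t.1 [t.2.1] ⊆ t.2.2

/-- An effect triple is trivial if `δ(p,a) ∈ S`. -/
def CFGame.TrivialTriple (G : CFGame A) (t : G.Q × A × Set G.Q) : Prop :=
  G.T.step t.1 t.2.1 ∈ t.2.2

/-- The substrategy `σ^α`. -/
def subStrat (σ : JStrat A) (α : List (HSym A)) : JStrat A :=
  fun β a => σ (α ++ β) a

/-- The effect set `E(σ)`: all effect triples of all substrategies of `σ`. -/
def CFGame.EffectSet (G : CFGame A) (σ : JStrat A) : Set (G.Q × A × Set G.Q) :=
  {t | ∃ α : List (HSym A), G.IsEffectTriple (subStrat σ α) t}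

/-- The transition relation of the NFA `N_E` associated with a set `E` of effect
triples (state set `P(Q)`, initial state `{s}`, accepting states the subsets of `F`). -/
def CFGame.NEStep (G : CFGame A) (E : Set (G.Q × A × Set G.Q))
    (S : Set G.Q) (a : A) (S' : Set G.Q) : Prop :=
  ∀ p ∈ S, ∃ S'' : Set G.Q, S'' ⊆ S' ∧ (p, a, S'') ∈ E

/-- A strategy for the online word problem `OnlineNFA(N_E)`. -/
def CFGame.NEOnlineStrat (G : CFGame A) (E : Set (G.Q × A × Set G.Q))
    (ρ : List A → Set G.Q) : Prop :=
  ρ [] = {G.T.start} ∧ ∀ (w : List A) (a : A), G.NEStep E (ρ w) a (ρ (w ++ [a]))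

/-- The winning set of a strategy for `OnlineNFA(N_E)`. -/
def CFGame.NEWins (G : CFGame A) (ρ : List A → Set G.Q) : Set (List A) :=
  {w | ρ w ⊆ G.T.accept}

/-- A strategy automaton `M` is `(p,a,St)`-inducing. -/
def CFGame.Inducing (G : CFGame A) {S : Type} (M : DFA (HSym A) S)
    (p : G.Q) (a : A) (St : Set G.Q) : Prop :=
  G.Terminating (autoStrat M) ∧ G.Fn a ∧
  (∀ u : List A, G.R a u → G.StatesOf (autoStrat M) p u ⊆ St) ∧
  ∃ QA : G.Q → Set S,
    (∀ q ∈ St, ∀ q' ∈ St, q ≠ q' → Disjoint (QA q) (QA q')) ∧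
    ∀ u : List A, G.R a u → ∀ τ : RStrat A, G.RValid τ → ∀ n : ℕ,
      (G.play (autoStrat M) τ u n).2.1 = [] →
      ((∀ q ∈ St,
          (M.eval (G.play (autoStrat M) τ u n).1 ∈ QA q ↔
            G.T.evalFrom p (flat (G.play (autoStrat M) τ u n).1) = q)) ∧
        ∀ β : List (HSym A), β <+: (G.play (autoStrat M) τ u n).1 →
          β ≠ (G.play (autoStrat M) τ u n).1 → ∀ r ∈ St, M.eval β ∉ QA r)

end CFG

/-! In the game `a → aa` with target `{aᵏ : 2 ≤ k}` no strategy wins on `ε`, while calling the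
first letter wins on every other word, since Romeo must turn `a·w` into `aa·w`; this strategy
only asks whether the history is empty, so it is regular. A forgetful strategy cannot tell the
history `âⁿ` from `ε`: on the input `a` it either reads and ends with `a`, which is lost, or it
calls the leading `a` forever. -/

theorem Language.isRegular_singleton {α : Type*} (x : List α) :
    ({x} : Language α).IsRegular := by
  refine .of_finite_range_leftQuotient <|
    ((x.tails.finite_toSet.image fun s => ({s} : Language α)).insert 0).subset ?_
  rintro _ ⟨w, rfl⟩
  by_cases hw : ∃ y, w ++ y = x
  · obtain ⟨y, rfl⟩ := hw
    refine Or.inr ⟨y, (List.mem_tails _ _).2 (List.suffix_append w y), ?_⟩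
    ext z
    exact (List.append_right_inj w).symm
  · exact Or.inl (Set.eq_empty_of_forall_notMem fun z hz => hw ⟨z, hz⟩)

namespace CFG

variable {A : Type}

@[simp]
theorem flat_append (α β : List (HSym A)) : flat (α ++ β) = flat α ++ flat β :=
  List.filterMap_append

@[simp]
theorem flat_map_inl (w : List A) : flat (w.map Sum.inl) = w := by
  induction w with
  | nil => rfl
  | cons a w ih => simp [flat] at ih ⊢

@[simp]
theorem flat_cons_inr (a : A) (α : List (HSym A)) : flat (Sum.inr a :: α) = flat α := rfl

@[simp]
theorem flat_replicate_inr (a : A) (n : ℕ) : flat (List.replicate n (Sum.inr a)) = [] := by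
  induction n with
  | zero => rfl
  | succ n ih => simp [List.replicate_succ, ih]

def callFirst : JStrat A
  | [], _ => .call
  | _ :: _, _ => .read

namespace CFGame

variable (G : CFGame A) {σ : JStrat A} {τ : RStrat A}

theorem exists_rValid : ∃ τ : RStrat A, G.RValid τ := by
  classical
  exact ⟨fun _ a => if h : G.Fn a then h.choose else [],
    fun _ a ha => by simpa [ha] using ha.choose_spec⟩

theorem step_nil (α : List (HSym A)) (d : ℕ) : G.step σ τ (α, [], d) = (α, [], d) := rfl

theorem step_of_call {α : List (HSym A)} {a : A} (k : ℕ) (v : List (A × ℕ)) (d : ℕ)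
    (ha : G.Fn a) (h : σ α a = .call) :
    G.step σ τ (α, (a, k) :: v, d) =
      (α ++ [Sum.inr a], (τ α a).map (·, k + 1) ++ v, max d (k + 1)) :=
  if_pos ⟨ha, h⟩

theorem step_of_ne_call {α : List (HSym A)} {a : A} (k : ℕ) (v : List (A × ℕ)) (d : ℕ)
    (h : σ α a ≠ .call) : G.step σ τ (α, (a, k) :: v, d) = (α ++ [Sum.inl a], v, d) :=
  if_neg fun hc => h hc.2

theorem play_succ (w : List A) (n : ℕ) :
    G.play σ τ w (n + 1) = G.step σ τ (G.play σ τ w n) :=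
  Function.iterate_succ_apply' _ _ _

theorem play_nil (n : ℕ) : G.play σ τ [] n = ([], [], 0) :=
  Function.iterate_fixed (G.step_nil [] 0) n

theorem winsOn_nil_iff : G.WinsOn σ [] ↔ G.T.start ∈ G.T.accept := by
  obtain ⟨τ, hτ⟩ := G.exists_rValid
  constructor
  · intro h
    obtain ⟨n, -, hacc⟩ := h τ hτ
    simpa [play_nil, flat] using hacc
  · intro h τ _
    exact ⟨0, rfl, h⟩

theorem iterate_step_of_forall_ne_call {α : List (HSym A)}
    (hread : ∀ β a, σ (α ++ β) a ≠ .call) (v : List (A × ℕ)) (d : ℕ) :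
    (G.step σ τ)^[v.length] (α, v, d) = (α ++ (v.map Prod.fst).map Sum.inl, [], d) := by
  induction v generalizing α with
  | nil => simp
  | cons p v ih =>
    rw [List.length_cons, Function.iterate_succ_apply, G.step_of_ne_call p.2 v d
      (by simpa using hread [] p.1), ih fun β a => by simpa using hread (Sum.inl p.1 :: β) a]
    simp

theorem winsOn_singleton_of_ne_call {a : A} (hread : σ [] a ≠ .call) (hwin : G.WinsOn σ [a]) :
    G.T.evalFrom G.T.start [a] ∈ G.T.accept := by
  obtain ⟨τ, hτ⟩ := G.exists_rValid
  obtain ⟨_ | n, hrem, hacc⟩ := hwin τ hτ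
  · exact absurd hrem (List.cons_ne_nil _ _)
  · have hplay : G.play σ τ [a] (n + 1) = ([Sum.inl a], [], 0) := by
      rw [play, Function.iterate_succ_apply, List.map_singleton, G.step_of_ne_call 0 [] 0 hread]
      exact Function.iterate_fixed (G.step_nil [Sum.inl a] 0) n
    simpa [hplay, flat] using hacc

/-- The history `âⁿ` flattens to `ε`, so `σ` keeps calling the leading `a`. -/
theorem Forgetful.play_ne_nil {a : A} (hσ : G.Forgetful σ) (ha : G.Fn a)
    (hcall : σ [] a = .call) (hτ : ∀ α, ∃ u, τ α a = a :: u) (w : List A) (n : ℕ) :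
    (G.play σ τ (a :: w) n).2.1 ≠ [] := by
  suffices ∃ k v d, G.play σ τ (a :: w) n = (List.replicate n (Sum.inr a), (a, k) :: v, d) by
    obtain ⟨k, v, d, h⟩ := this
    simp [h]
  induction n with
  | zero => exact ⟨0, _, 0, rfl⟩
  | succ n ih =>
    obtain ⟨k, v, d, h⟩ := ih
    obtain ⟨u, hu⟩ := hτ (List.replicate n (Sum.inr a))
    have hcall' : σ (List.replicate n (Sum.inr a)) a = .call :=
      (hσ _ [] a ha (flat_replicate_inr a n)).trans hcall
    refine ⟨k + 1, u.map (·, k + 1) ++ v, max d (k + 1), ?_⟩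
    rw [play_succ, h, G.step_of_call k v d ha hcall', hu, List.replicate_succ']
    rfl

theorem callFirst_play {a : A} (ha : G.Fn a) (w : List A) :
    ∃ n, (G.play callFirst τ (a :: w) n).2.1 = [] ∧
      flat (G.play callFirst τ (a :: w) n).1 = τ [] a ++ w := by
  let v := (τ [] a).map (·, 1) ++ w.map (·, 0)
  refine ⟨v.length + 1, ?_⟩
  rw [play, Function.iterate_succ_apply, List.map_cons, G.step_of_call 0 _ 0 ha rfl,
    G.iterate_step_of_forall_ne_call fun _ _ => by simp [callFirst]]
  refine ⟨rfl, ?_⟩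
  rw [flat_append, flat_map_inl]
  simp [v, flat, Function.comp_def]

theorem callFirst_winsOn {a : A} (ha : G.Fn a) {w : List A}
    (hw : ∀ u, G.R a u → G.T.evalFrom G.T.start (u ++ w) ∈ G.T.accept) :
    G.WinsOn callFirst (a :: w) := by
  intro τ hτ
  obtain ⟨n, hrem, hflat⟩ := G.callFirst_play ha w (τ := τ)
  exact ⟨n, hrem, hflat ▸ hw _ (hτ [] a ha)⟩

end CFGame

def countUpTo (n : ℕ) : DFA Unit (Fin (n + 1)) where
  step q _ := ⟨min (q + 1) n, by omega⟩
  start := 0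
  accept := {Fin.last n}

theorem countUpTo_evalFrom (n : ℕ) (q : Fin (n + 1)) (w : List Unit) :
    (countUpTo n).evalFrom q w = ⟨min (q + w.length) n, by omega⟩ := by
  induction w generalizing q with
  | nil => ext; simp; omega
  | cons a w ih =>
    rw [DFA.evalFrom_cons, ih]
    ext
    simp [countUpTo]
    omega

theorem countUpTo_evalFrom_mem_accept (n : ℕ) (q : Fin (n + 1)) (w : List Unit) :
    (countUpTo n).evalFrom q w ∈ (countUpTo n).accept ↔ n ≤ q + w.length := by
  rw [countUpTo_evalFrom]
  simp only [countUpTo, Set.mem_singleton_iff, Fin.ext_iff, Fin.val_last]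
  omega

def doublingGame : CFGame Unit where
  Q := Fin 3
  fintypeQ := inferInstance
  T := countUpTo 2
  minimal_reachable q := ⟨List.replicate q (), by
    rw [countUpTo_evalFrom]
    ext
    simp [countUpTo]
    omega⟩
  minimal_distinguishable q q' h := by
    have hq := h (List.replicate (2 - q) ())
    have hq' := h (List.replicate (2 - q') ())
    simp only [countUpTo_evalFrom_mem_accept, List.length_replicate] at hq hq'
    omega
  R _ v := v = [(), ()]
  R_ne _ _ h := h ▸ List.cons_ne_nil _ _
  R_regular _ := Language.isRegular_singleton [(), ()]

namespace doublingGame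

theorem fn (a : Unit) : doublingGame.Fn a := ⟨[(), ()], rfl⟩

theorem mem_target_iff (w : List Unit) :
    doublingGame.T.evalFrom doublingGame.T.start w ∈ doublingGame.T.accept ↔ 2 ≤ w.length :=
  countUpTo_evalFrom_mem_accept 2 0 w |>.trans (by simp)

theorem callFirst_winsOn_cons (a : Unit) (w : List Unit) :
    doublingGame.WinsOn callFirst (a :: w) :=
  doublingGame.callFirst_winsOn (fn a) fun u hu => by
    rw [mem_target_iff, hu]
    simp

theorem callFirst_dominant : doublingGame.Dominant callFirst := by
  rintro σ (_ | ⟨a, w⟩) hw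
  · exact absurd (doublingGame.winsOn_nil_iff.1 hw) (by simpa using mem_target_iff [])
  · exact callFirst_winsOn_cons a w

theorem callFirst_regularStrat : doublingGame.RegularStrat callFirst := by
  refine (congrArg Language.IsRegular (Set.ext fun x => ?_)).mpr
    (Language.isRegular_singleton [Sum.inl ()])
  constructor
  · rintro ⟨_ | _, a, -, hcall, rfl⟩
    · rfl
    · exact absurd hcall (by simp [callFirst])
  · rintro rfl
    exact ⟨[], (), fn (), rfl, rfl⟩

theorem not_dominant_of_forgetful {σ : JStrat Unit} (hσ : doublingGame.Forgetful σ) :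
    ¬ doublingGame.Dominant σ := by
  intro hdom
  have hwin : doublingGame.WinsOn σ [()] := hdom callFirst (callFirst_winsOn_cons () [])
  cases hstart : σ [] () with
  | read =>
    have := doublingGame.winsOn_singleton_of_ne_call (by simp [hstart]) hwin
    exact absurd ((mem_target_iff [()]).1 this) (by simp)
  | call =>
    obtain ⟨τ, hτ⟩ := doublingGame.exists_rValid
    obtain ⟨n, hrem, -⟩ := hwin τ hτ
    exact CFGame.Forgetful.play_ne_nil _ hσ (fn ()) hstart
      (fun α => ⟨[()], hτ α () (fn ())⟩) [] n hrem

end doublingGame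

theorem statement14 : ∃ (A : Type) (_ : Fintype A) (G : CFGame A),
    (∃ σ : JStrat A, G.RegularStrat σ ∧ G.Dominant σ) ∧
    ¬ ∃ σ : JStrat A, G.Forgetful σ ∧ G.Dominant σ :=
  ⟨Unit, inferInstance, doublingGame,
    ⟨callFirst, doublingGame.callFirst_regularStrat, doublingGame.callFirst_dominant⟩,
    fun ⟨_, hσ, hdom⟩ => doublingGame.not_dominant_of_forgetful hσ hdom⟩

end CFG
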